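/- For all n ≥ 0 and k ≥ 0, the number f_{n,k} of meanders with catastrophes of length n ending at altitude k equals the sum over m = 0, …, n of d_m times the number of catastrophe-free meanders of length n−m ending at altitude k, where d_m is the number of excursions with catastrophes of length m that are either empty (m = 0) or whose final step is a catastrophe. -/

import Mathlib

/-!
Cut a meander with catastrophes just before its maximal suffix of steps from `J`. A
catastrophe `-h` is never in `J`, so the cut falls right after the last catastrophe (or at the
start): the prefix is an excursion that is empty or ends with a catastrophe, and the suffix is a
catastrophe-free meander from altitude `0`. Conversely, appending such a meander to such an
excursion gives back a meander with catastrophes whose cut is exactly there, so the cut is a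
bijection onto the pairs whose lengths add up to `n`.
-/

/-- Validity of a path with catastrophes over the jump set `J`, starting from
altitude `h`: each step is either a jump `s ∈ J` keeping the altitude
nonnegative, or a catastrophe `s = -h` from an altitude `h > 0` with `-h ∉ J`
(landing at altitude `0`). -/
def CatValidFrom (J : Finset ℤ) : ℤ → List ℤ → Prop
  | _, [] => True
  | h, s :: r =>
    ((s ∈ J ∧ 0 ≤ h + s) ∨ (s = -h ∧ 0 < h ∧ -h ∉ J)) ∧ CatValidFrom J (h + s) r

/-- Validity of a catastrophe-free meander over the jump set `J`, starting from
altitude `h`: every step belongs to `J` and all partial altitudes are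
nonnegative. -/
def FreeFrom (J : Finset ℤ) : ℤ → List ℤ → Prop
  | _, [] => True
  | h, s :: r => (s ∈ J ∧ 0 ≤ h + s) ∧ FreeFrom J (h + s) r

/-- The last step of `l` (a path starting at altitude `0`) is a catastrophe:
`l` ends with the jump `-h` where `h > 0` is the altitude reached before the
last step and `-h ∉ J`. -/
def EndsWithCat (J : Finset ℤ) (l : List ℤ) : Prop :=
  ∃ l' : List ℤ, l = l' ++ [-l'.sum] ∧ 0 < l'.sum ∧ -l'.sum ∉ J

/-- The number `d m` of excursions with catastrophes of length `m` that are
either empty or whose final step is a catastrophe. -/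
noncomputable def dCount (J : Finset ℤ) (m : ℕ) : ℕ :=
  Nat.card {l : List ℤ //
    l.length = m ∧ CatValidFrom J 0 l ∧ l.sum = 0 ∧ (l = [] ∨ EndsWithCat J l)}

/-- The number of catastrophe-free meanders of length `n` ending at
altitude `k`. -/
noncomputable def freeMCount (J : Finset ℤ) (n : ℕ) (k : ℤ) : ℕ :=
  Nat.card {l : List ℤ // l.length = n ∧ FreeFrom J 0 l ∧ l.sum = k}

namespace List

variable {α : Type*} {p : α → Bool} {e f : List α}

theorem rtakeWhile_append_of_forall (he : ∀ hl : e ≠ [], ¬p (e.getLast hl))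
    (hf : ∀ x ∈ f, p x) : (e ++ f).rtakeWhile p = f := by
  induction f using List.reverseRecOn with
  | nil => simpa using rtakeWhile_eq_nil_iff.2 he
  | append_singleton f x ih =>
    rw [← List.append_assoc, rtakeWhile_concat_pos _ _ x (hf x (by simp)),
      ih fun y hy => hf y (by simp [hy])]

theorem rdropWhile_append_of_forall (he : ∀ hl : e ≠ [], ¬p (e.getLast hl))
    (hf : ∀ x ∈ f, p x) : (e ++ f).rdropWhile p = e := by
  have := rdropWhile_append_rtakeWhile (p := p) (l := e ++ f)
  rw [rtakeWhile_append_of_forall he hf] at this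
  exact List.append_cancel_right this

end List

section Meanders

variable (J : Finset ℤ)

abbrev IsResetExcursion (e : List ℤ) : Prop :=
  CatValidFrom J 0 e ∧ e.sum = 0 ∧ (e = [] ∨ EndsWithCat J e)

abbrev CatMeander (n : ℕ) (k : ℤ) : Type :=
  {l : List ℤ // l.length = n ∧ CatValidFrom J 0 l ∧ l.sum = k}

abbrev ResetExcursion (m : ℕ) : Type :=
  {e : List ℤ // e.length = m ∧ IsResetExcursion J e}

abbrev FreeMeander (n : ℕ) (k : ℤ) : Type :=
  {l : List ℤ // l.length = n ∧ FreeFrom J 0 l ∧ l.sum = k}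

variable {J}

theorem catValidFrom_append (h : ℤ) (a b : List ℤ) :
    CatValidFrom J h (a ++ b) ↔ CatValidFrom J h a ∧ CatValidFrom J (h + a.sum) b := by
  induction a generalizing h with
  | nil => simp [CatValidFrom]
  | cons s r ih =>
    simp only [List.cons_append, CatValidFrom, ih, List.sum_cons, add_assoc, and_assoc]

theorem freeFrom_iff (h : ℤ) (l : List ℤ) :
    FreeFrom J h l ↔ CatValidFrom J h l ∧ ∀ s ∈ l, s ∈ J := by
  induction l generalizing h with
  | nil => simp [FreeFrom, CatValidFrom]
  | cons s r ih =>
    simp only [FreeFrom, CatValidFrom, ih, List.forall_mem_cons]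
    grind

theorem finite_catValidFrom (n : ℕ) (h : ℤ) :
    {l : List ℤ | l.length = n ∧ CatValidFrom J h l}.Finite := by
  induction n generalizing h with
  | zero => exact (Set.finite_singleton []).subset (by rintro l ⟨hl, -⟩; simpa using hl)
  | succ n ih =>
    refine ((insert (-h) J).finite_toSet.biUnion fun s _ =>
      (ih (h + s)).image (List.cons s)).subset ?_
    rintro (_ | ⟨s, r⟩) ⟨hl, hstep, hr⟩
    · simp at hl
    · refine Set.mem_biUnion (x := s) ?_ ⟨r, ⟨by simpa using hl, hr⟩, rfl⟩
      rcases hstep with ⟨hs, -⟩ | ⟨rfl, -⟩ <;> simp [*]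

instance (n : ℕ) (k : ℤ) : Finite (CatMeander J n k) :=
  ((finite_catValidFrom n 0).subset fun _ hl => ⟨hl.1, hl.2.1⟩).to_subtype

theorem CatValidFrom.isResetExcursion_iff {e : List ℤ} (he : CatValidFrom J 0 e) :
    IsResetExcursion J e ↔ ∀ hl : e ≠ [], e.getLast hl ∉ J := by
  rcases e.eq_nil_or_concat' with rfl | ⟨e, a, rfl⟩
  · exact iff_of_true ⟨he, rfl, .inl rfl⟩ (by simp)
  simp only [IsResetExcursion, he, true_and, ne_eq, List.append_eq_nil_iff, List.cons_ne_self,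
    and_false, not_false_eq_true, List.getLast_append_of_ne_nil, List.getLast_singleton,
    forall_const, false_or]
  constructor
  · rintro ⟨-, e', he', -, hnot⟩
    obtain ⟨-, rfl⟩ := List.append_singleton_inj.1 he'
    exact hnot
  · intro ha
    obtain ⟨-, hstep, -⟩ := (catValidFrom_append 0 e [a]).1 he
    rcases hstep with ⟨haJ, -⟩ | ⟨rfl, hpos, hnot⟩
    · exact absurd haJ ha
    · exact ⟨by simp, e, by simp, by simpa using hpos, by simpa using hnot⟩

theorem CatValidFrom.isResetExcursion_rdropWhile {l : List ℤ} (hl : CatValidFrom J 0 l) :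
    IsResetExcursion J (l.rdropWhile (· ∈ J)) := by
  rw [← List.rdropWhile_append_rtakeWhile (p := (· ∈ J)) (l := l), catValidFrom_append] at hl
  refine (hl.1.isResetExcursion_iff).2 fun hne => ?_
  simpa using List.rdropWhile_last_not _ _ hne

theorem CatValidFrom.freeFrom_rtakeWhile {l : List ℤ} (hl : CatValidFrom J 0 l) :
    FreeFrom J 0 (l.rtakeWhile (· ∈ J)) := by
  have hsum := hl.isResetExcursion_rdropWhile.2.1
  rw [← List.rdropWhile_append_rtakeWhile (p := (· ∈ J)) (l := l), catValidFrom_append,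
    hsum] at hl
  exact (freeFrom_iff 0 _).2 ⟨hl.2, fun s hs => by simpa using List.mem_rtakeWhile_imp hs⟩

theorem IsResetExcursion.catValidFrom_append {e f : List ℤ} (he : IsResetExcursion J e)
    (hf : FreeFrom J 0 f) : CatValidFrom J 0 (e ++ f) :=
  (_root_.catValidFrom_append 0 e f).2 ⟨he.1, by simpa [he.2.1] using ((freeFrom_iff 0 f).1 hf).1⟩

theorem IsResetExcursion.split_append {e f : List ℤ} (he : IsResetExcursion J e)
    (hf : FreeFrom J 0 f) :
    (e ++ f).rdropWhile (· ∈ J) = e ∧ (e ++ f).rtakeWhile (· ∈ J) = f := by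
  have hlast : ∀ hl : e ≠ [], ¬decide (e.getLast hl ∈ J) := by
    simpa using (he.1.isResetExcursion_iff).1 he
  have hmem : ∀ s ∈ f, decide (s ∈ J) := by simpa using ((freeFrom_iff 0 f).1 hf).2
  exact ⟨List.rdropWhile_append_of_forall hlast hmem, List.rtakeWhile_append_of_forall hlast hmem⟩

def resetFiberEquiv (n m : ℕ) (k : ℤ) (hm : m ≤ n) :
    {l : CatMeander J n k // (l.1.rdropWhile (· ∈ J)).length = m} ≃
      ResetExcursion J m × FreeMeander J (n - m) k where
  toFun l :=
    have hsplit := List.rdropWhile_append_rtakeWhile (p := (· ∈ J)) (l := l.1.1)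
    have hreset := l.1.2.2.1.isResetExcursion_rdropWhile
    (⟨_, l.2, hreset⟩,
      ⟨_, by
          have := congrArg List.length hsplit
          rw [List.length_append, l.2, l.1.2.1] at this
          omega,
        l.1.2.2.1.freeFrom_rtakeWhile,
        by
          have := congrArg List.sum hsplit
          rw [List.sum_append, hreset.2.1, zero_add] at this
          exact this.trans l.1.2.2.2⟩)
  invFun p :=
    ⟨⟨p.1.1 ++ p.2.1, by simp [p.1.2.1, p.2.2.1]; omega,
      p.1.2.2.catValidFrom_append p.2.2.2.1, by simp [p.1.2.2.2.1, p.2.2.2.2]⟩,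
      by rw [(p.1.2.2.split_append p.2.2.2.1).1, p.1.2.1]⟩
  left_inv l := Subtype.ext (Subtype.ext List.rdropWhile_append_rtakeWhile)
  right_inv p :=
    have hsplit := p.1.2.2.split_append p.2.2.2.1
    Prod.ext (Subtype.ext hsplit.1) (Subtype.ext hsplit.2)

end Meanders

theorem meandersCat_eq_sum_general (J : Finset ℤ) (n : ℕ) (k : ℕ) :
    Nat.card {l : List ℤ // l.length = n ∧ CatValidFrom J 0 l ∧ l.sum = (k : ℤ)} =
      ∑ m ∈ Finset.range (n + 1), dCount J m * freeMCount J (n - m) (k : ℤ) := by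
  let resetLength : CatMeander J n k → Fin (n + 1) := fun l =>
    ⟨(l.1.rdropWhile (· ∈ J)).length,
      Nat.lt_succ_of_le ((List.rdropWhile_prefix _ _).length_le.trans_eq l.2.1)⟩
  calc Nat.card (CatMeander J n k)
      = Nat.card (Σ m : Fin (n + 1), {l // resetLength l = m}) :=
        Nat.card_congr (Equiv.sigmaFiberEquiv resetLength).symm
    _ = ∑ m : Fin (n + 1), Nat.card {l // resetLength l = m} := Nat.card_sigma
    _ = ∑ m : Fin (n + 1), dCount J m * freeMCount J (n - m) k := by
        refine Finset.sum_congr rfl fun m _ => ?_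
        rw [dCount, freeMCount, ← Nat.card_prod]
        exact Nat.card_congr ((Equiv.subtypeEquivRight fun _ => Fin.ext_iff).trans
          (resetFiberEquiv n m k (Nat.le_of_lt_succ m.2)))
    _ = _ := Fin.sum_univ_eq_sum_range (fun m => dCount J m * freeMCount J (n - m) k) (n + 1)

/-- **Decomposition of meanders with catastrophes.** The number `f n k` of
meanders with catastrophes of length `n` ending at altitude `k` equals
`∑_{m=0}^{n} d m · (number of catastrophe-free meanders of length n-m ending
at altitude k)`. -/
theorem meandersCat_eq_sum (J : Finset ℤ) (hJ : J.Nonempty) (n : ℕ) (k : ℕ) :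
    Nat.card {l : List ℤ // l.length = n ∧ CatValidFrom J 0 l ∧ l.sum = (k : ℤ)} =
      ∑ m ∈ Finset.range (n + 1), dCount J m * freeMCount J (n - m) (k : ℤ) :=
  meandersCat_eq_sum_general J n k
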